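/- For every χ ∈ (0,1): ∫_χ^1 (1−ζ) ζ^{−3/4} (ζ−χ)^{−3/4} dζ = (16/5)·(1−χ)^{5/4}·₂F₁(3/4, 2; 9/4; 1−χ). -/

import Mathlib

/-- The Gauss hypergeometric series `₂F₁(a,b;c;z) = Σ_n (a)_n (b)_n / ((c)_n n!) · zⁿ`,
where `(a)_n` is the rising factorial (Pochhammer symbol). -/
noncomputable def hyp2F1 (a b c z : ℝ) : ℝ :=
  ∑' n : ℕ, ((ascPochhammer ℝ n).eval a * (ascPochhammer ℝ n).eval b /
      ((ascPochhammer ℝ n).eval c * (n.factorial : ℝ))) * z ^ n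

/-- `A(χ) := ∫_χ^1 (1−ζ) ζ^{−3/4} (ζ−χ)^{−3/4} dζ`. -/
noncomputable def Aint (χ : ℝ) : ℝ :=
  ∫ ζ in χ..1, (1 - ζ) * ζ ^ (-(3/4) : ℝ) * (ζ - χ) ^ (-(3/4) : ℝ)

/-!
The substitution `ζ = 1 - (1 - χ) t` turns `A(χ)` into `(1 - χ)^{5/4}` times Euler's integral
`∫₀¹ t^{b-1} (1-t)^{c-b-1} (1 - z t)^{-a} dt` with `(a, b, c) = (3/4, 2, 9/4)` and `z = 1 - χ`.
Expanding `(1 - z t)^{-a}` by the binomial series and integrating termwise (all terms are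
nonnegative) gives `B(b, c - b) · ₂F₁(a, b; c; z)`, because the moments of the Beta weight are
`∫₀¹ tⁿ t^{b-1} (1-t)^{c-b-1} dt = B(b, c - b) (b)_n / (c)_n`. Finally `B(2, 1/4) = 16/5`.
-/

open Real MeasureTheory Set Filter ProbabilityTheory
open scoped Nat Interval

theorem Ring.choose_add_sub_one {K : Type*} [Field K] [CharZero K] (a : K) (n : ℕ) :
    Ring.choose (a + n - 1) n = (ascPochhammer K n).eval a / n ! := by
  rw [Ring.choose_eq_smul, Polynomial.descPochhammer_smeval_eq_ascPochhammer,
    Polynomial.ascPochhammer_smeval_eq_eval, smul_eq_mul]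
  ring_nf

theorem hasSum_ascPochhammer_div_factorial_mul_pow (a : ℝ) {y : ℝ} (hy : |y| < 1) :
    HasSum (fun n : ℕ => (ascPochhammer ℝ n).eval a / n ! * y ^ n) ((1 - y) ^ (-a)) := by
  have h := (one_div_one_sub_rpow_hasFPowerSeriesOnBall_zero a).hasSum
    (y := y) (by simpa [edist_dist, Real.dist_eq] using hy)
  simp only [FormalMultilinearSeries.ofScalars_apply_eq, zero_add, smul_eq_mul,
    Ring.choose_add_sub_one] at h
  rwa [rpow_neg (by linarith [(abs_lt.1 hy).2]), inv_eq_one_div]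

theorem Real.Gamma_add_nat {b : ℝ} (hb : 0 < b) (n : ℕ) :
    Gamma (b + n) = (ascPochhammer ℝ n).eval b * Gamma b := by
  induction n with
  | zero => simp
  | succ n ih =>
    rw [Nat.cast_succ, ← add_assoc, Gamma_add_one (by positivity), ih, ascPochhammer_succ_eval]
    ring

theorem Complex.ofReal_rpow_mul_one_sub_rpow {t : ℝ} (ht : t ∈ Icc (0 : ℝ) 1) (u v : ℝ) :
    ((t ^ (u - 1) * (1 - t) ^ (v - 1) : ℝ) : ℂ) =
      (t : ℂ) ^ ((u : ℂ) - 1) * (1 - (t : ℂ)) ^ ((v : ℂ) - 1) := by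
  push_cast
  rw [Complex.ofReal_cpow ht.1, Complex.ofReal_cpow (sub_nonneg.2 ht.2)]
  push_cast
  ring_nf

namespace ProbabilityTheory

theorem beta_add_nat {u v : ℝ} (hu : 0 < u) (hv : 0 < v) (n : ℕ) :
    beta (u + n) v = beta u v * (ascPochhammer ℝ n).eval u / (ascPochhammer ℝ n).eval (u + v) := by
  have hpos := ascPochhammer_pos n (u + v) (by positivity)
  have hΓ := Gamma_pos_of_pos (add_pos hu hv)
  rw [beta, beta, add_right_comm, Gamma_add_nat hu, Gamma_add_nat (add_pos hu hv)]
  field_simp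

theorem intervalIntegrable_rpow_mul_one_sub_rpow {u v : ℝ} (hu : 0 < u) (hv : 0 < v) :
    IntervalIntegrable (fun t : ℝ => t ^ (u - 1) * (1 - t) ^ (v - 1)) volume 0 1 := by
  have h := (intervalIntegrable_iff_integrableOn_Icc_of_le zero_le_one).1
    (Complex.betaIntegral_convergent (u := u) (v := v) (by simpa) (by simpa))
  refine (intervalIntegrable_iff_integrableOn_Icc_of_le zero_le_one).2
    (IntegrableOn.congr_fun h.re (fun t ht => ?_) measurableSet_Icc)
  rw [← Complex.ofReal_rpow_mul_one_sub_rpow ht]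
  rfl

theorem integral_rpow_mul_one_sub_rpow {u v : ℝ} (hu : 0 < u) (hv : 0 < v) :
    ∫ t in (0 : ℝ)..1, t ^ (u - 1) * (1 - t) ^ (v - 1) = beta u v := by
  rw [beta_eq_betaIntegralReal u v hu hv, Complex.betaIntegral,
    ← intervalIntegral.integral_congr fun t ht =>
      Complex.ofReal_rpow_mul_one_sub_rpow (uIcc_of_le (zero_le_one (α := ℝ)) ▸ ht) u v,
    intervalIntegral.integral_ofReal, Complex.ofReal_re]

theorem integral_pow_mul_rpow_mul_one_sub_rpow {b c : ℝ} (hb : 0 < b) (hbc : b < c) (n : ℕ) :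
    ∫ t in (0 : ℝ)..1, t ^ n * (t ^ (b - 1) * (1 - t) ^ (c - b - 1)) =
      beta b (c - b) * (ascPochhammer ℝ n).eval b / (ascPochhammer ℝ n).eval c := by
  have hcb : 0 < c - b := sub_pos.2 hbc
  calc ∫ t in (0 : ℝ)..1, t ^ n * (t ^ (b - 1) * (1 - t) ^ (c - b - 1))
      = ∫ t in (0 : ℝ)..1, t ^ (b + n - 1) * (1 - t) ^ (c - b - 1) := by
        refine intervalIntegral.integral_congr_ae (Eventually.of_forall fun t ht => ?_)
        rw [uIoc_of_le zero_le_one] at ht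
        rw [show b + n - 1 = (b - 1) + n by ring, rpow_add_natCast ht.1.ne']
        ring
    _ = _ := by
        rw [integral_rpow_mul_one_sub_rpow (by positivity) hcb, beta_add_nat hb hcb,
          add_sub_cancel]

end ProbabilityTheory

theorem intervalIntegrable_euler_integrand {a b c z : ℝ} (hb : 0 < b) (hbc : b < c)
    (hz₀ : 0 ≤ z) (hz₁ : z < 1) :
    IntervalIntegrable (fun t => t ^ (b - 1) * (1 - t) ^ (c - b - 1) * (1 - z * t) ^ (-a))
      volume 0 1 := by
  refine (intervalIntegrable_rpow_mul_one_sub_rpow hb (sub_pos.2 hbc)).mul_continuousOn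
    (ContinuousOn.rpow_const (by fun_prop) fun t ht => Or.inl (ne_of_gt ?_))
  rw [uIcc_of_le zero_le_one] at ht
  nlinarith [ht.1, ht.2]

theorem beta_mul_hyp2F1_eq_integral {a b c z : ℝ} (ha : 0 < a) (hb : 0 < b) (hbc : b < c)
    (hz₀ : 0 ≤ z) (hz₁ : z < 1) :
    beta b (c - b) * hyp2F1 a b c z =
      ∫ t in (0 : ℝ)..1, t ^ (b - 1) * (1 - t) ^ (c - b - 1) * (1 - z * t) ^ (-a) := by
  set w : ℝ → ℝ := fun t => t ^ (b - 1) * (1 - t) ^ (c - b - 1)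
  set term : ℕ → ℝ → ℝ := fun n t => (ascPochhammer ℝ n).eval a / n ! * z ^ n * (t ^ n * w t)
  have hIoc : Ι (0 : ℝ) 1 = Ioc 0 1 := uIoc_of_le zero_le_one
  have hterm_nonneg : ∀ n, ∀ t ∈ Ioc (0 : ℝ) 1, 0 ≤ term n t := fun n t ht => by
    have := ascPochhammer_pos n a ha
    have := rpow_nonneg ht.1.le (b - 1)
    have := rpow_nonneg (sub_nonneg.2 ht.2) (c - b - 1)
    have := ht.1
    positivity
  have hterm_hasSum : ∀ t ∈ Ioc (0 : ℝ) 1,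
      HasSum (fun n => term n t) (w t * (1 - z * t) ^ (-a)) := fun t ht => by
    have hy : |z * t| < 1 := abs_lt.2 ⟨by nlinarith [ht.1], by nlinarith [ht.1, ht.2]⟩
    have hterm_eq : (fun n => term n t) =
        fun n => w t * ((ascPochhammer ℝ n).eval a / n ! * (z * t) ^ n) := by
      funext n
      simp only [term, mul_pow]
      ring
    rw [hterm_eq]
    exact (hasSum_ascPochhammer_div_factorial_mul_pow a hy).mul_left (w t)
  have hterm_integral : ∀ n, ∫ t in (0 : ℝ)..1, term n t = beta b (c - b) *
      ((ascPochhammer ℝ n).eval a * (ascPochhammer ℝ n).eval b /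
        ((ascPochhammer ℝ n).eval c * (n ! : ℝ)) * z ^ n) := fun n => by
    have := ascPochhammer_pos n c (hb.trans hbc)
    rw [intervalIntegral.integral_const_mul, integral_pow_mul_rpow_mul_one_sub_rpow hb hbc]
    field_simp
  have hsum := intervalIntegral.hasSum_integral_of_dominated_convergence (μ := volume) term
    (fun n => Measurable.aestronglyMeasurable (by fun_prop))
    (fun n => Eventually.of_forall fun t ht =>
      (Real.norm_of_nonneg (hterm_nonneg n t (hIoc ▸ ht))).le)
    (Eventually.of_forall fun t ht => (hterm_hasSum t (hIoc ▸ ht)).summable)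
    ((intervalIntegrable_euler_integrand hb hbc hz₀ hz₁).congr
      fun t ht => (hterm_hasSum t (hIoc ▸ ht)).tsum_eq.symm)
    (Eventually.of_forall fun t ht => hterm_hasSum t (hIoc ▸ ht))
  simp only [hterm_integral] at hsum
  rw [hyp2F1, ← tsum_mul_left, hsum.tsum_eq]

theorem Aint_eq_rpow_mul_integral {χ : ℝ} (hχ₁ : χ < 1) :
    Aint χ = (1 - χ) ^ (5/4 : ℝ) *
      ∫ t in (0 : ℝ)..1, t ^ ((2 : ℝ) - 1) * (1 - t) ^ ((9/4 : ℝ) - 2 - 1) *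
        (1 - (1 - χ) * t) ^ (-(3/4) : ℝ) := by
  set z := 1 - χ with hz
  have hz₀ : 0 < z := sub_pos.2 hχ₁
  have hsub := intervalIntegral.integral_comp_sub_mul
    (fun ζ => (1 - ζ) * ζ ^ (-(3/4) : ℝ) * (ζ - χ) ^ (-(3/4) : ℝ)) (a := 0) (b := 1) hz₀.ne' 1
  rw [mul_one, mul_zero, sub_sub_cancel, sub_zero, smul_eq_mul] at hsub
  have hpoint : ∀ t ∈ uIcc (0 : ℝ) 1,
      (1 - (1 - z * t)) * (1 - z * t) ^ (-(3/4) : ℝ) * (1 - z * t - χ) ^ (-(3/4) : ℝ) =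
        z * z ^ (-(3/4) : ℝ) * (t ^ ((2 : ℝ) - 1) * (1 - t) ^ ((9/4 : ℝ) - 2 - 1) *
          (1 - z * t) ^ (-(3/4) : ℝ)) := fun t ht => by
    rw [uIcc_of_le zero_le_one] at ht
    rw [show 1 - z * t - χ = z * (1 - t) by rw [hz]; ring, mul_rpow hz₀.le (sub_nonneg.2 ht.2),
      show (2 : ℝ) - 1 = 1 by norm_num, show (9/4 : ℝ) - 2 - 1 = -(3/4) by norm_num, rpow_one]
    ring
  rw [intervalIntegral.integral_congr hpoint, intervalIntegral.integral_const_mul,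
    eq_inv_mul_iff_mul_eq₀ hz₀.ne'] at hsub
  rw [Aint, ← hsub, ← mul_assoc, ← mul_assoc]
  congr 1
  rw [show (5/4 : ℝ) = 1 + 1 + -(3/4) by norm_num, rpow_add hz₀, rpow_add hz₀, rpow_one]

theorem beta_two_one_div_four : beta 2 (1/4) = 16/5 := by
  have hΓ := (Gamma_pos_of_pos (show (0 : ℝ) < 1/4 by norm_num)).ne'
  rw [beta, show (2 : ℝ) + 1/4 = 1/4 + (2 : ℕ) by norm_num, Gamma_add_nat (by norm_num), Gamma_two]
  simp only [ascPochhammer_succ_eval, ascPochhammer_zero, Polynomial.eval_one]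
  field_simp
  norm_num

/-- For every χ ∈ (0,1),
∫_χ^1 (1−ζ) ζ^{−3/4} (ζ−χ)^{−3/4} dζ = (16/5)·(1−χ)^{5/4}·₂F₁(3/4, 2; 9/4; 1−χ). -/
theorem stmt14 (χ : ℝ) (hχ : χ ∈ Set.Ioo (0 : ℝ) 1) :
    Aint χ = (16/5) * (1 - χ) ^ ((5/4 : ℝ)) * hyp2F1 (3/4) 2 (9/4) (1 - χ) := by
  obtain ⟨hχ₀, hχ₁⟩ := hχ
  rw [Aint_eq_rpow_mul_integral hχ₁, ← beta_mul_hyp2F1_eq_integral (by norm_num) two_pos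
    (by norm_num) (by linarith) (by linarith), show (9/4 : ℝ) - 2 = 1/4 by norm_num,
    beta_two_one_div_four]
  ring
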